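/- arXiv:2007.08408 — 3 statements merged into one kernel-verified Lean document; each statement's English description precedes it below -/
import Mathlib

section
/- Let b ∈ C_b^{2,2} satisfy the dissipativity condition with constant γ > 0. Then for the y-derivative flows of the frozen equation started at (x₁,y₁) and (x₂,y₂) with the same noise path, one has for all t ≥ 0: |∇_y X^{x₁,y₁}_t − ∇_y X^{x₂,y₂}_t|² ≤ C·t·e^{-γt/2}|x₁ − x₂|² + C|y₁ − y₂|², where C = C(‖b‖₂, γ) does not depend on t. -/
/-!
Apply both derivative flows to a vector `v` and let `u = ∇_y X^{x₁,y₁} v - ∇_y X^{x₂,y₂} v`.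
Then `u' = ∂ₓb(X¹, y₁) u + e` with forcing
`e = (∂ₓb(X¹, y₁) - ∂ₓb(X², y₂)) ∇_y X² v + (∂_y b(X¹, y₁) - ∂_y b(X², y₂)) v`,
and dissipativity with `2⟪e, u⟫ ≤ γ|u|² + |e|²/γ` gives `(|u|²)' ≤ -γ|u|² + |e|²/γ`.
The same energy estimate with forcing `∂_y b v` bounds `‖∇_y X‖` by `M/γ`; as the bounded
second derivatives make the partials of `b` `M`-Lipschitz, the contraction estimate for `X`
yields `|e|² ≤ K²|v|²(e^{-γs/2}|x₁ - x₂|² + (C₀ + 1)|y₁ - y₂|²)` with `K = M(M/γ + 1)`.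
Integrating against `e^{γs}`, the decaying part of the forcing contributes
`(2/γ)(e^{-γt/2} - e^{-γt}) ≤ t e^{-γt/2}`, whence the factor `t`.
-/

open Real
open scoped RealInnerProductSpace

theorem Real.exp_sub_one_le_mul_exp (x : ℝ) : exp x - 1 ≤ x * exp x := by
  have h := one_sub_le_exp_neg x
  have hx : exp (-x) * exp x = 1 := by rw [← exp_add, neg_add_cancel, exp_zero]
  nlinarith [exp_pos x]

theorem le_mul_exp_add_div_of_hasDerivAt_le {γ a c t : ℝ} (hγ : 0 < γ) (ha : 0 ≤ a)
    (hc : 0 ≤ c) {g g' : ℝ → ℝ} (hg0 : g 0 = 0) (hg : ∀ s, HasDerivAt g (g' s) s)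
    (hg' : ∀ s, 0 ≤ s → g' s ≤ -γ * g s + a * exp (-γ * s / 2) + c) (ht : 0 ≤ t) :
    g t ≤ a * t * exp (-γ * t / 2) + c / γ := by
  have hexp (r s : ℝ) : HasDerivAt (fun s => exp (r * s)) (exp (r * s) * r) s := by
    simpa using ((hasDerivAt_id s).const_mul r).exp
  have hhalf (s : ℝ) : exp (γ * s) * exp (-γ * s / 2) = exp (γ / 2 * s) := by
    rw [← exp_add]; ring_nf
  -- `φ s` is `e^{γs} g s` minus the integral of `e^{γσ}` times the forcing over `[0, s]`
  set φ : ℝ → ℝ := fun s =>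
    exp (γ * s) * g s - 2 * a / γ * (exp (γ / 2 * s) - 1) - c / γ * (exp (γ * s) - 1)
  have hφ (s : ℝ) : HasDerivAt φ
      (exp (γ * s) * (γ * g s + g' s) - a * exp (γ / 2 * s) - c * exp (γ * s)) s :=
    ((((hexp γ s).mul (hg s)).sub (((hexp (γ / 2) s).sub_const 1).const_mul _)).sub
      (((hexp γ s).sub_const 1).const_mul _)).congr_deriv (by field_simp)
  have hφ_anti : AntitoneOn φ (Set.Icc 0 t) := by
    refine antitoneOn_of_hasDerivWithinAt_nonpos (convex_Icc 0 t)
      (fun s _ => (hφ s).continuousAt.continuousWithinAt)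
      (fun s _ => (hφ s).hasDerivWithinAt) fun s hs => ?_
    rw [interior_Icc] at hs
    have := mul_le_mul_of_nonneg_left (hg' s hs.1.le) (exp_pos (γ * s)).le
    have hforce : exp (γ * s) * (-γ * g s + a * exp (-γ * s / 2) + c)
        = -γ * (exp (γ * s) * g s) + a * exp (γ / 2 * s) + c * exp (γ * s) := by
      rw [← hhalf]; ring
    linarith
  have hφt : φ t ≤ 0 := by
    simpa [φ, hg0] using hφ_anti (Set.left_mem_Icc.mpr ht) (Set.right_mem_Icc.mpr ht) ht
  have hlin : 2 * a / γ * (exp (γ / 2 * t) - 1) ≤ a * t * exp (γ / 2 * t) := by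
    have := mul_le_mul_of_nonneg_left (exp_sub_one_le_mul_exp (γ / 2 * t)) ha
    rw [div_mul_eq_mul_div, div_le_iff₀ hγ]
    nlinarith
  have hrhs : exp (γ * t) * (a * t * exp (-γ * t / 2) + c / γ)
      = a * t * exp (γ / 2 * t) + c / γ * exp (γ * t) := by
    rw [← hhalf]; ring
  refine le_of_mul_le_mul_left ?_ (exp_pos (γ * t))
  have : 0 ≤ c / γ := by positivity
  linarith

theorem norm_sq_le_of_hasDerivAt_of_dissipative {E : Type*} [NormedAddCommGroup E]
    [InnerProductSpace ℝ E] {γ a c t : ℝ} (hγ : 0 < γ) (ha : 0 ≤ a) (hc : 0 ≤ c)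
    {A : ℝ → E →L[ℝ] E} {u f : ℝ → E} (hA : ∀ s, 0 ≤ s → ∀ w, ⟪A s w, w⟫ ≤ -γ * ‖w‖ ^ 2)
    (hu0 : u 0 = 0) (hu : ∀ s, HasDerivAt u (A s (u s) + f s) s)
    (hf : ∀ s, 0 ≤ s → ‖f s‖ ^ 2 ≤ a * exp (-γ * s / 2) + c) (ht : 0 ≤ t) :
    ‖u t‖ ^ 2 ≤ a / γ * t * exp (-γ * t / 2) + c / γ ^ 2 := by
  have key := le_mul_exp_add_div_of_hasDerivAt_le hγ (div_nonneg ha hγ.le)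
    (div_nonneg hc hγ.le) (by simp [hu0]) (fun s => (hu s).norm_sq) (fun s hs => ?_) ht
  · rwa [div_div, ← sq] at key
  have hcs := real_inner_le_norm (f s) (u s)
  have hamgm : 2 * (‖f s‖ * ‖u s‖) ≤ γ * ‖u s‖ ^ 2 + ‖f s‖ ^ 2 / γ := by
    rw [← sub_nonneg]
    have : γ * ‖u s‖ ^ 2 + ‖f s‖ ^ 2 / γ - 2 * (‖f s‖ * ‖u s‖)
        = (γ * ‖u s‖ - ‖f s‖) ^ 2 / γ := by field_simp; ring
    rw [this]; positivity
  have hfγ : ‖f s‖ ^ 2 / γ ≤ a / γ * exp (-γ * s / 2) + c / γ := by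
    rw [div_mul_eq_mul_div, ← add_div]; exact div_le_div_of_nonneg_right (hf s hs) hγ.le
  rw [inner_add_right, real_inner_comm (A s (u s)), real_inner_comm (f s)]
  linarith [hA s hs (u s)]

theorem ContinuousLinearMap.opNorm_sq_le_of_norm_apply_sq_le {𝕜 E F : Type*}
    [NontriviallyNormedField 𝕜] [SeminormedAddCommGroup E] [NormedSpace 𝕜 E]
    [SeminormedAddCommGroup F] [NormedSpace 𝕜 F] {T : E →L[𝕜] F} {R : ℝ} (hR : 0 ≤ R)
    (h : ∀ v, ‖T v‖ ^ 2 ≤ R * ‖v‖ ^ 2) : ‖T‖ ^ 2 ≤ R := by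
  refine (sq_le_sq₀ (norm_nonneg T) (sqrt_nonneg R)).2 (T.opNorm_le_bound (sqrt_nonneg R)
    fun v => ?_) |>.trans (sq_sqrt hR).le
  rw [← sqrt_sq (norm_nonneg (T v)), ← sqrt_sq (norm_nonneg v), ← sqrt_mul hR]
  exact sqrt_le_sqrt (h v)

theorem norm_fderiv_sub_le_of_norm_iteratedFDeriv_two_le {E G : Type*} [NormedAddCommGroup E]
    [NormedSpace ℝ E] [NormedAddCommGroup G] [NormedSpace ℝ G] {f : E → G} {M : ℝ}
    (hf : ContDiff ℝ 2 f) (hM : ∀ p, ‖iteratedFDeriv ℝ 2 f p‖ ≤ M) (p q : E) :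
    ‖fderiv ℝ f p - fderiv ℝ f q‖ ≤ M * ‖p - q‖ :=
  convex_univ.norm_image_sub_le_of_norm_fderiv_le
    (fun z _ => ((hf.fderiv_right (by norm_num)).differentiable one_ne_zero) z)
    (fun z _ => by rw [← norm_iteratedFDeriv_one, norm_iteratedFDeriv_fderiv]; exact hM z)
    (Set.mem_univ q) (Set.mem_univ p)

section Partial

variable {E F G : Type*} [NormedAddCommGroup E] [NormedSpace ℝ E] [NormedAddCommGroup F]
  [NormedSpace ℝ F] [NormedAddCommGroup G] [NormedSpace ℝ G] {b : E → F → G}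

theorem fderiv_left_eq_comp_inl {x : E} {y : F}
    (hb : DifferentiableAt ℝ (fun p : E × F => b p.1 p.2) (x, y)) :
    fderiv ℝ (fun x' => b x' y) x
      = (fderiv ℝ (fun p : E × F => b p.1 p.2) (x, y)).comp (.inl ℝ E F) :=
  (hb.hasFDerivAt.comp x (hasFDerivAt_prodMk_left (𝕜 := ℝ) x y) :).fderiv

theorem fderiv_right_eq_comp_inr {x : E} {y : F}
    (hb : DifferentiableAt ℝ (fun p : E × F => b p.1 p.2) (x, y)) :
    fderiv ℝ (fun y' => b x y') y
      = (fderiv ℝ (fun p : E × F => b p.1 p.2) (x, y)).comp (.inr ℝ E F) :=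
  (hb.hasFDerivAt.comp y (hasFDerivAt_prodMk_right x y)).fderiv

theorem norm_fderiv_right_le {M : ℝ} (hb : Differentiable ℝ (fun p : E × F => b p.1 p.2))
    (hbd : ∀ p, ‖fderiv ℝ (fun p : E × F => b p.1 p.2) p‖ ≤ M)
    (x : E) (y : F) : ‖fderiv ℝ (fun y' => b x y') y‖ ≤ M := by
  rw [fderiv_right_eq_comp_inr (hb _)]
  exact (ContinuousLinearMap.opNorm_comp_le _ _).trans <|
    (mul_le_of_le_one_right (norm_nonneg _) (ContinuousLinearMap.norm_inr_le_one _ _ _)).trans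
      (hbd _)

theorem norm_fderiv_left_sub_le {M : ℝ} (hb : ContDiff ℝ 2 (fun p : E × F => b p.1 p.2))
    (hbd : ∀ p, ‖iteratedFDeriv ℝ 2 (fun p : E × F => b p.1 p.2) p‖ ≤ M)
    (x₁ x₂ : E) (y₁ y₂ : F) :
    ‖fderiv ℝ (fun x' => b x' y₁) x₁ - fderiv ℝ (fun x' => b x' y₂) x₂‖
      ≤ M * ‖(x₁, y₁) - (x₂, y₂)‖ := by
  rw [fderiv_left_eq_comp_inl (hb.differentiable two_ne_zero _),
    fderiv_left_eq_comp_inl (hb.differentiable two_ne_zero _), ← ContinuousLinearMap.sub_comp]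
  exact (ContinuousLinearMap.opNorm_comp_le _ _).trans <|
    (mul_le_of_le_one_right (norm_nonneg _) (ContinuousLinearMap.norm_inl_le_one _ _ _)).trans
      (norm_fderiv_sub_le_of_norm_iteratedFDeriv_two_le hb hbd _ _)

theorem norm_fderiv_right_sub_le {M : ℝ} (hb : ContDiff ℝ 2 (fun p : E × F => b p.1 p.2))
    (hbd : ∀ p, ‖iteratedFDeriv ℝ 2 (fun p : E × F => b p.1 p.2) p‖ ≤ M)
    (x₁ x₂ : E) (y₁ y₂ : F) :
    ‖fderiv ℝ (fun y' => b x₁ y') y₁ - fderiv ℝ (fun y' => b x₂ y') y₂‖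
      ≤ M * ‖(x₁, y₁) - (x₂, y₂)‖ := by
  rw [fderiv_right_eq_comp_inr (hb.differentiable two_ne_zero _),
    fderiv_right_eq_comp_inr (hb.differentiable two_ne_zero _), ← ContinuousLinearMap.sub_comp]
  exact (ContinuousLinearMap.opNorm_comp_le _ _).trans <|
    (mul_le_of_le_one_right (norm_nonneg _) (ContinuousLinearMap.norm_inr_le_one _ _ _)).trans
      (norm_fderiv_sub_le_of_norm_iteratedFDeriv_two_le hb hbd _ _)

end Partial

theorem Prod.norm_sq_le_add {E F : Type*} [SeminormedAddCommGroup E] [SeminormedAddCommGroup F]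
    (p : E × F) : ‖p‖ ^ 2 ≤ ‖p.1‖ ^ 2 + ‖p.2‖ ^ 2 := by
  rw [Prod.norm_def]
  rcases max_cases ‖p.1‖ ‖p.2‖ with ⟨h, -⟩ | ⟨h, -⟩ <;> rw [h] <;>
    linarith [sq_nonneg ‖p.1‖, sq_nonneg ‖p.2‖]

section DerivativeFlow

variable {E F : Type*} [NormedAddCommGroup E] [InnerProductSpace ℝ E] [NormedAddCommGroup F]
  [NormedSpace ℝ F] {b : E → F → E} {X : E → F → ℝ → E} {V : E → F → ℝ → F →L[ℝ] E} {γ M : ℝ}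

theorem hasDerivAt_yDerivFlow_apply
    (hV : ∀ x y t, HasDerivAt (V x y) ((fderiv ℝ (fun x' => b x' y) (X x y t)).comp (V x y t)
      + fderiv ℝ (fun y' => b (X x y t) y') y) t) (x : E) (y : F) (v : F) (s : ℝ) :
    HasDerivAt (fun s => V x y s v) (fderiv ℝ (fun x' => b x' y) (X x y s) (V x y s v)
      + fderiv ℝ (fun y' => b (X x y s) y') y v) s := by
  simpa using (hV x y s).clm_apply (hasDerivAt_const s v)

theorem norm_yDerivFlow_le (hγ : 0 < γ)
    (hdiss : ∀ x y h, ⟪fderiv ℝ (fun x' => b x' y) x h, h⟫ ≤ -γ * ‖h‖ ^ 2)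
    (hBy : ∀ x y, ‖fderiv ℝ (fun y' => b x y') y‖ ≤ M) (hV0 : ∀ x y, V x y 0 = 0)
    (hV : ∀ x y t, HasDerivAt (V x y) ((fderiv ℝ (fun x' => b x' y) (X x y t)).comp (V x y t)
      + fderiv ℝ (fun y' => b (X x y t) y') y) t) (x : E) (y : F) {t : ℝ} (ht : 0 ≤ t) :
    ‖V x y t‖ ≤ M / γ := by
  have hM : 0 ≤ M := (norm_nonneg _).trans (hBy x y)
  suffices ‖V x y t‖ ^ 2 ≤ (M / γ) ^ 2 from (sq_le_sq₀ (norm_nonneg _) (by positivity)).1 this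
  refine ContinuousLinearMap.opNorm_sq_le_of_norm_apply_sq_le (sq_nonneg _) fun v => ?_
  have hforce (s : ℝ) : ‖fderiv ℝ (fun y' => b (X x y s) y') y v‖ ^ 2 ≤ M ^ 2 * ‖v‖ ^ 2 := by
    rw [← mul_pow]
    exact pow_le_pow_left₀ (norm_nonneg _) ((ContinuousLinearMap.le_opNorm _ v).trans
      (mul_le_mul_of_nonneg_right (hBy _ _) (norm_nonneg v))) 2
  refine (norm_sq_le_of_hasDerivAt_of_dissipative (a := 0) (c := M ^ 2 * ‖v‖ ^ 2) hγ le_rfl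
    (by positivity) (fun s _ => hdiss (X x y s) y) (by simp [hV0])
    (hasDerivAt_yDerivFlow_apply hV x y v) (fun s _ => by simpa using hforce s) ht).trans_eq ?_
  ring

theorem norm_sub_yDerivFlow_sq_le (hγ : 0 < γ)
    (hdiss : ∀ x y h, ⟪fderiv ℝ (fun x' => b x' y) x h, h⟫ ≤ -γ * ‖h‖ ^ 2)
    (hBy : ∀ x y, ‖fderiv ℝ (fun y' => b x y') y‖ ≤ M)
    (hAlip : ∀ x₁ x₂ y₁ y₂, ‖fderiv ℝ (fun x' => b x' y₁) x₁ - fderiv ℝ (fun x' => b x' y₂) x₂‖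
      ≤ M * ‖(x₁, y₁) - (x₂, y₂)‖)
    (hBlip : ∀ x₁ x₂ y₁ y₂, ‖fderiv ℝ (fun y' => b x₁ y') y₁ - fderiv ℝ (fun y' => b x₂ y') y₂‖
      ≤ M * ‖(x₁, y₁) - (x₂, y₂)‖)
    (hV0 : ∀ x y, V x y 0 = 0)
    (hV : ∀ x y t, HasDerivAt (V x y) ((fderiv ℝ (fun x' => b x' y) (X x y t)).comp (V x y t)
      + fderiv ℝ (fun y' => b (X x y t) y') y) t)
    {C₀ : ℝ} (hC₀ : 0 ≤ C₀) {x₁ x₂ : E} {y₁ y₂ : F}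
    (hX : ∀ s, 0 ≤ s → ‖X x₁ y₁ s - X x₂ y₂ s‖ ^ 2
      ≤ exp (-γ * s / 2) * ‖x₁ - x₂‖ ^ 2 + C₀ * ‖y₁ - y₂‖ ^ 2) {t : ℝ} (ht : 0 ≤ t) :
    ‖V x₁ y₁ t - V x₂ y₂ t‖ ^ 2 ≤ (M * (M / γ + 1)) ^ 2 / γ * t * exp (-γ * t / 2) * ‖x₁ - x₂‖ ^ 2
      + (M * (M / γ + 1)) ^ 2 * (C₀ + 1) / γ ^ 2 * ‖y₁ - y₂‖ ^ 2 := by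
  have hM : 0 ≤ M := (norm_nonneg _).trans (hBy x₁ y₁)
  set K := M * (M / γ + 1)
  refine ContinuousLinearMap.opNorm_sq_le_of_norm_apply_sq_le (by positivity) fun v => ?_
  set A : E → F → E →L[ℝ] E := fun x y => fderiv ℝ (fun x' => b x' y) x
  set B : E → F → F →L[ℝ] E := fun x y => fderiv ℝ (fun y' => b x y') y
  set e : ℝ → E := fun s => (A (X x₁ y₁ s) y₁ - A (X x₂ y₂ s) y₂) (V x₂ y₂ s v)
    + (B (X x₁ y₁ s) y₁ - B (X x₂ y₂ s) y₂) v
  have hu (s : ℝ) : HasDerivAt (fun s => (V x₁ y₁ s - V x₂ y₂ s) v)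
      (A (X x₁ y₁ s) y₁ ((V x₁ y₁ s - V x₂ y₂ s) v) + e s) s := by
    refine ((hasDerivAt_yDerivFlow_apply hV x₁ y₁ v s).sub
      (hasDerivAt_yDerivFlow_apply hV x₂ y₂ v s)).congr_deriv ?_
    simp only [e, A, B, sub_apply, map_sub]
    abel
  have he (s : ℝ) (hs : 0 ≤ s) : ‖e s‖ ^ 2 ≤ K ^ 2 * ‖v‖ ^ 2 * ‖x₁ - x₂‖ ^ 2 * exp (-γ * s / 2)
      + K ^ 2 * ‖v‖ ^ 2 * (C₀ + 1) * ‖y₁ - y₂‖ ^ 2 := by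
    set d := ‖(X x₁ y₁ s, y₁) - (X x₂ y₂ s, y₂)‖
    have hVv : ‖V x₂ y₂ s v‖ ≤ M / γ * ‖v‖ := ContinuousLinearMap.le_of_opNorm_le _
      (norm_yDerivFlow_le hγ hdiss hBy hV0 hV x₂ y₂ hs) v
    have hnorm : ‖e s‖ ≤ K * d * ‖v‖ := calc
      ‖e s‖ ≤ M * d * (M / γ * ‖v‖) + M * d * ‖v‖ := by
        refine (norm_add_le _ _).trans (add_le_add ?_ ?_)
        · exact ContinuousLinearMap.le_of_opNorm_le_of_le _ (hAlip _ _ _ _) hVv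
        · exact ContinuousLinearMap.le_of_opNorm_le _ (hBlip _ _ _ _) v
      _ = K * d * ‖v‖ := by ring
    have hd : d ^ 2 ≤ ‖X x₁ y₁ s - X x₂ y₂ s‖ ^ 2 + ‖y₁ - y₂‖ ^ 2 :=
      Prod.norm_sq_le_add ((X x₁ y₁ s, y₁) - (X x₂ y₂ s, y₂))
    calc ‖e s‖ ^ 2 ≤ (K * d * ‖v‖) ^ 2 := pow_le_pow_left₀ (norm_nonneg _) hnorm 2
      _ = K ^ 2 * ‖v‖ ^ 2 * d ^ 2 := by ring
      _ ≤ K ^ 2 * ‖v‖ ^ 2 * (exp (-γ * s / 2) * ‖x₁ - x₂‖ ^ 2 + (C₀ + 1) * ‖y₁ - y₂‖ ^ 2) := by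
        gcongr; linarith [hX s hs]
      _ = _ := by ring
  refine (norm_sq_le_of_hasDerivAt_of_dissipative hγ (by positivity) (by positivity)
    (fun s _ => hdiss (X x₁ y₁ s) y₁) (by simp [hV0]) hu he ht).trans_eq ?_
  ring

end DerivativeFlow

theorem stmt_5_general {n m : ℕ}
    (b : EuclideanSpace ℝ (Fin n) → EuclideanSpace ℝ (Fin m) → EuclideanSpace ℝ (Fin n))
    (γ M : ℝ) (hγ : 0 < γ)
    (hb : ContDiff ℝ 2 (fun p : EuclideanSpace ℝ (Fin n) × EuclideanSpace ℝ (Fin m) =>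
      b p.1 p.2))
    -- ‖b‖₂ : all first and second derivatives bounded by M
    (hbd1 : ∀ p, ‖fderiv ℝ (fun q : EuclideanSpace ℝ (Fin n) × EuclideanSpace ℝ (Fin m) =>
      b q.1 q.2) p‖ ≤ M)
    (hbd2 : ∀ p, ‖iteratedFDeriv ℝ 2
      (fun q : EuclideanSpace ℝ (Fin n) × EuclideanSpace ℝ (Fin m) => b q.1 q.2) p‖ ≤ M)
    (hdiss : ∀ x y h, ⟪fderiv ℝ (fun x' => b x' y) x h, h⟫ ≤ -γ * ‖h‖ ^ 2)
    (X : EuclideanSpace ℝ (Fin n) → EuclideanSpace ℝ (Fin m) → ℝ → EuclideanSpace ℝ (Fin n))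
    -- the basic contraction estimate for the flow is available
    (hcontr : ∃ C₀ : ℝ, 0 ≤ C₀ ∧ ∀ t, 0 ≤ t → ∀ x₁ x₂ y₁ y₂,
      ‖X x₁ y₁ t - X x₂ y₂ t‖ ^ 2 ≤
        Real.exp (-γ * t / 2) * ‖x₁ - x₂‖ ^ 2 + C₀ * ‖y₁ - y₂‖ ^ 2)
    (V : EuclideanSpace ℝ (Fin n) → EuclideanSpace ℝ (Fin m) → ℝ →
      (EuclideanSpace ℝ (Fin m) →L[ℝ] EuclideanSpace ℝ (Fin n)))
    (hV0 : ∀ x y, V x y 0 = 0)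
    (hV : ∀ x y t, HasDerivAt (V x y)
      ((fderiv ℝ (fun x' => b x' y) (X x y t)).comp (V x y t)
        + fderiv ℝ (fun y' => b (X x y t) y') y) t) :
    ∃ C : ℝ, 0 < C ∧ ∀ t, 0 ≤ t → ∀ x₁ x₂ y₁ y₂,
      ‖V x₁ y₁ t - V x₂ y₂ t‖ ^ 2 ≤
        C * t * Real.exp (-γ * t / 2) * ‖x₁ - x₂‖ ^ 2 + C * ‖y₁ - y₂‖ ^ 2 := by
  obtain ⟨C₀, hC₀, hX⟩ := hcontr
  set K := M * (M / γ + 1)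
  have hCx : 0 ≤ K ^ 2 / γ := by positivity
  have hCy : 0 ≤ K ^ 2 * (C₀ + 1) / γ ^ 2 := by positivity
  refine ⟨K ^ 2 / γ + K ^ 2 * (C₀ + 1) / γ ^ 2 + 1, by positivity,
    fun t ht x₁ x₂ y₁ y₂ => ?_⟩
  refine (norm_sub_yDerivFlow_sq_le hγ hdiss (norm_fderiv_right_le (hb.differentiable two_ne_zero) hbd1)
    (norm_fderiv_left_sub_le hb hbd2) (norm_fderiv_right_sub_le hb hbd2) hV0 hV hC₀
    (fun s hs => hX s hs x₁ x₂ y₁ y₂) ht).trans ?_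
  gcongr ?_ * _ * _ * _ + ?_ * _ <;> linarith

/-- Hölder-type continuity of the `y`-derivative flow in the initial data:
with `b ∈ C_b^{2,2}` dissipative in `x` (constant `γ`), the `y`-derivative flows started
at `(x₁,y₁)` and `(x₂,y₂)` with a common noise path satisfy
`|∇_y X^{x₁,y₁}_t − ∇_y X^{x₂,y₂}_t|² ≤ C t e^{-γt/2}|x₁−x₂|² + C|y₁−y₂|²`,
with `C = C(‖b‖₂,γ)` independent of `t`. -/
theorem stmt_5 {n m : ℕ}
    (b : EuclideanSpace ℝ (Fin n) → EuclideanSpace ℝ (Fin m) → EuclideanSpace ℝ (Fin n))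
    (γ M : ℝ) (hγ : 0 < γ) (hM : 0 ≤ M)
    (hb : ContDiff ℝ 2 (fun p : EuclideanSpace ℝ (Fin n) × EuclideanSpace ℝ (Fin m) =>
      b p.1 p.2))
    -- ‖b‖₂ : all first and second derivatives bounded by M
    (hbd1 : ∀ p, ‖fderiv ℝ (fun q : EuclideanSpace ℝ (Fin n) × EuclideanSpace ℝ (Fin m) =>
      b q.1 q.2) p‖ ≤ M)
    (hbd2 : ∀ p, ‖iteratedFDeriv ℝ 2
      (fun q : EuclideanSpace ℝ (Fin n) × EuclideanSpace ℝ (Fin m) => b q.1 q.2) p‖ ≤ M)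
    (hdiss : ∀ x y h, ⟪fderiv ℝ (fun x' => b x' y) x h, h⟫ ≤ -γ * ‖h‖ ^ 2)
    (X : EuclideanSpace ℝ (Fin n) → EuclideanSpace ℝ (Fin m) → ℝ → EuclideanSpace ℝ (Fin n))
    -- the basic contraction estimate for the flow is available
    (hcontr : ∃ C₀ : ℝ, 0 ≤ C₀ ∧ ∀ t, 0 ≤ t → ∀ x₁ x₂ y₁ y₂,
      ‖X x₁ y₁ t - X x₂ y₂ t‖ ^ 2 ≤
        Real.exp (-γ * t / 2) * ‖x₁ - x₂‖ ^ 2 + C₀ * ‖y₁ - y₂‖ ^ 2)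
    (V : EuclideanSpace ℝ (Fin n) → EuclideanSpace ℝ (Fin m) → ℝ →
      (EuclideanSpace ℝ (Fin m) →L[ℝ] EuclideanSpace ℝ (Fin n)))
    (hV0 : ∀ x y, V x y 0 = 0)
    (hV : ∀ x y t, HasDerivAt (V x y)
      ((fderiv ℝ (fun x' => b x' y) (X x y t)).comp (V x y t)
        + fderiv ℝ (fun y' => b (X x y t) y') y) t) :
    ∃ C : ℝ, 0 < C ∧ ∀ t, 0 ≤ t → ∀ x₁ x₂ y₁ y₂,
      ‖V x₁ y₁ t - V x₂ y₂ t‖ ^ 2 ≤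
        C * t * Real.exp (-γ * t / 2) * ‖x₁ - x₂‖ ^ 2 + C * ‖y₁ - y₂‖ ^ 2 :=
  stmt_5_general b γ M hγ hb hbd1 hbd2 hdiss X hcontr V hV0 hV
end

section
/- Let b ∈ C_b^{2,2} satisfy the dissipativity condition with constant γ > 0. Then the x-derivative flows satisfy, for all t ≥ 0: |∇ₓX^{x₁,y₁}_t − ∇ₓX^{x₂,y₂}_t|² ≤ C·t·e^{-γt/2}(|x₁ − x₂|² + |y₁ − y₂|²), with C = C(‖b‖₂, γ) independent of t. -/
set_option maxHeartbeats 1000000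

open scoped RealInnerProductSpace

section Aux

variable {n m : ℕ}

/-- Lipschitz continuity of the partial `x`-derivative of `b` in both variables,
from the bound on the second derivative. -/
lemma stmt6_aux_lip
    (b : EuclideanSpace ℝ (Fin n) → EuclideanSpace ℝ (Fin m) → EuclideanSpace ℝ (Fin n))
    (M : ℝ) (hM : 0 ≤ M)
    (hb : ContDiff ℝ 2 (fun p : EuclideanSpace ℝ (Fin n) × EuclideanSpace ℝ (Fin m) =>
      b p.1 p.2))
    (hbd2 : ∀ p, ‖iteratedFDeriv ℝ 2
      (fun q : EuclideanSpace ℝ (Fin n) × EuclideanSpace ℝ (Fin m) => b q.1 q.2) p‖ ≤ M) :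
    ∀ x₁ x₂ y₁ y₂, ‖fderiv ℝ (fun x' => b x' y₁) x₁ - fderiv ℝ (fun x' => b x' y₂) x₂‖
      ≤ M * (‖x₁ - x₂‖ + ‖y₁ - y₂‖) := by
  set F : EuclideanSpace ℝ (Fin n) × EuclideanSpace ℝ (Fin m) → EuclideanSpace ℝ (Fin n) :=
    fun p => b p.1 p.2 with hF
  have hdF : Differentiable ℝ F := hb.differentiable (by norm_num)
  have hrep : ∀ x y, fderiv ℝ (fun x' => b x' y) x
      = (fderiv ℝ F (x, y)).comp ((ContinuousLinearMap.id ℝ _).prod 0) := by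
    intro x y
    have h1 : HasFDerivAt (fun x' : EuclideanSpace ℝ (Fin n) => (x', y))
        ((ContinuousLinearMap.id ℝ _).prod 0) x :=
      (hasFDerivAt_id x).prodMk (hasFDerivAt_const y x)
    exact ((hdF (x, y)).hasFDerivAt.comp x h1).fderiv
  intro x₁ x₂ y₁ y₂
  have hdF2 : Differentiable ℝ (fderiv ℝ F) :=
    (hb.fderiv_right (m := 1) (by norm_num)).differentiable (by norm_num)
  have hlip : ‖fderiv ℝ F (x₁, y₁) - fderiv ℝ F (x₂, y₂)‖ ≤ M * ‖x₁ - x₂‖ + M * ‖y₁ - y₂‖ := by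
    have hb2 : ∀ p ∈ (Set.univ : Set (EuclideanSpace ℝ (Fin n) × EuclideanSpace ℝ (Fin m))),
        ‖fderiv ℝ (fderiv ℝ F) p‖ ≤ M := by
      intro p _
      calc ‖fderiv ℝ (fderiv ℝ F) p‖ = ‖iteratedFDeriv ℝ 0 (fderiv ℝ (fderiv ℝ F)) p‖ := by
            rw [norm_iteratedFDeriv_zero]
        _ = ‖iteratedFDeriv ℝ 1 (fderiv ℝ F) p‖ := norm_iteratedFDeriv_fderiv
        _ = ‖iteratedFDeriv ℝ 2 F p‖ := norm_iteratedFDeriv_fderiv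
        _ ≤ M := hbd2 p
    have := Convex.norm_image_sub_le_of_norm_fderiv_le (f := fderiv ℝ F)
      (fun p _ => hdF2 p) hb2 convex_univ (Set.mem_univ (x₂, y₂))
      (Set.mem_univ (x₁, y₁))
    calc ‖fderiv ℝ F (x₁, y₁) - fderiv ℝ F (x₂, y₂)‖
        ≤ M * ‖(x₁, y₁) - (x₂, y₂)‖ := this
      _ ≤ M * ‖x₁ - x₂‖ + M * ‖y₁ - y₂‖ := by
          have hnp : ‖(x₁, y₁) - (x₂, y₂)‖ ≤ ‖x₁ - x₂‖ + ‖y₁ - y₂‖ := by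
            rw [Prod.mk_sub_mk, Prod.norm_def]
            exact max_le (le_add_of_nonneg_right (norm_nonneg _))
              (le_add_of_nonneg_left (norm_nonneg _))
          calc M * ‖(x₁, y₁) - (x₂, y₂)‖ ≤ M * (‖x₁ - x₂‖ + ‖y₁ - y₂‖) :=
                mul_le_mul_of_nonneg_left hnp hM
            _ = M * ‖x₁ - x₂‖ + M * ‖y₁ - y₂‖ := by ring
  rw [hrep x₁ y₁, hrep x₂ y₂, ← ContinuousLinearMap.sub_comp]
  calc ‖(fderiv ℝ F (x₁, y₁) - fderiv ℝ F (x₂, y₂)).comp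
        ((ContinuousLinearMap.id ℝ _).prod 0)‖
      ≤ ‖fderiv ℝ F (x₁, y₁) - fderiv ℝ F (x₂, y₂)‖ *
        ‖((ContinuousLinearMap.id ℝ (EuclideanSpace ℝ (Fin n))).prod
          (0 : EuclideanSpace ℝ (Fin n) →L[ℝ] EuclideanSpace ℝ (Fin m)))‖ :=
        ContinuousLinearMap.opNorm_comp_le _ _
    _ ≤ (M * ‖x₁ - x₂‖ + M * ‖y₁ - y₂‖) * 1 := by
        apply mul_le_mul hlip ?_ (norm_nonneg _) (by positivity)
        apply ContinuousLinearMap.opNorm_le_bound _ zero_le_one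
        intro u
        rw [one_mul, ContinuousLinearMap.prod_apply, Prod.norm_def]
        simp
    _ = M * (‖x₁ - x₂‖ + ‖y₁ - y₂‖) := by ring

/-- Mean value step: if `F` has derivative bounded by `B` on `(0,t)` and `F 0 = 0`,
then `F t ≤ B * t`. -/
lemma stmt6_aux_mvt (F F' : ℝ → ℝ) (B t : ℝ) (ht : 0 ≤ t)
    (hF : ∀ s, HasDerivAt F (F' s) s)
    (hF0 : F 0 = 0)
    (hbd : ∀ s ∈ Set.Ioo 0 t, F' s ≤ B) : F t ≤ B * t := by
  set G : ℝ → ℝ := fun s => B * s - F s with hG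
  have hG' : ∀ s, HasDerivAt G (B - F' s) s := by
    intro s
    exact (((hasDerivAt_id s).const_mul B).sub (hF s)).congr_deriv (by simp)
  have hmono : MonotoneOn G (Set.Icc 0 t) := by
    apply monotoneOn_of_deriv_nonneg (convex_Icc 0 t)
    · exact fun s _ => ((hG' s).continuousAt).continuousWithinAt
    · intro s hs
      exact ((hG' s).differentiableAt).differentiableWithinAt
    · intro s hs
      rw [interior_Icc] at hs
      rw [(hG' s).deriv]
      linarith [hbd s hs]
  have := hmono (Set.left_mem_Icc.2 ht) (Set.right_mem_Icc.2 ht) ht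
  simp only [hG, hF0] at this
  linarith

end Aux

/-- continuity of the `x`-derivative flow in the initial data:
with `b ∈ C_b^{2,2}` dissipative in `x` (constant `γ`), the `x`-derivative flows
(`J' = (∇ₓb)(X_t,y)J`, `J(0)=I`) satisfy
`|∇ₓX^{x₁,y₁}_t − ∇ₓX^{x₂,y₂}_t|² ≤ C t e^{-γt/2}(|x₁−x₂|² + |y₁−y₂|²)`,
with `C = C(‖b‖₂,γ)` independent of `t`. -/
theorem stmt_6 {n m : ℕ}
    (b : EuclideanSpace ℝ (Fin n) → EuclideanSpace ℝ (Fin m) → EuclideanSpace ℝ (Fin n))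
    (γ M : ℝ) (hγ : 0 < γ) (hM : 0 ≤ M)
    (hb : ContDiff ℝ 2 (fun p : EuclideanSpace ℝ (Fin n) × EuclideanSpace ℝ (Fin m) =>
      b p.1 p.2))
    (hbd1 : ∀ p, ‖fderiv ℝ (fun q : EuclideanSpace ℝ (Fin n) × EuclideanSpace ℝ (Fin m) =>
      b q.1 q.2) p‖ ≤ M)
    (hbd2 : ∀ p, ‖iteratedFDeriv ℝ 2
      (fun q : EuclideanSpace ℝ (Fin n) × EuclideanSpace ℝ (Fin m) => b q.1 q.2) p‖ ≤ M)
    (hdiss : ∀ x y h, ⟪fderiv ℝ (fun x' => b x' y) x h, h⟫ ≤ -γ * ‖h‖ ^ 2)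
    (X : EuclideanSpace ℝ (Fin n) → EuclideanSpace ℝ (Fin m) → ℝ → EuclideanSpace ℝ (Fin n))
    -- available estimate: contraction of the flow
    (hcontr : ∃ C₀ : ℝ, 0 ≤ C₀ ∧ ∀ t, 0 ≤ t → ∀ x₁ x₂ y₁ y₂,
      ‖X x₁ y₁ t - X x₂ y₂ t‖ ^ 2 ≤
        Real.exp (-γ * t / 2) * ‖x₁ - x₂‖ ^ 2 + C₀ * ‖y₁ - y₂‖ ^ 2)
    (J : EuclideanSpace ℝ (Fin n) → EuclideanSpace ℝ (Fin m) → ℝ →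
      (EuclideanSpace ℝ (Fin n) →L[ℝ] EuclideanSpace ℝ (Fin n)))
    (hJ0 : ∀ x y, J x y 0 = ContinuousLinearMap.id ℝ (EuclideanSpace ℝ (Fin n)))
    (hJ : ∀ x y t, HasDerivAt (J x y)
      ((fderiv ℝ (fun x' => b x' y) (X x y t)).comp (J x y t)) t)
    -- available estimate: exponential decay of the derivative flow
    (hJbd : ∀ x y t, 0 ≤ t → ‖J x y t‖ ^ 2 ≤ Real.exp (-γ * t / 2)) :
    ∃ C : ℝ, 0 < C ∧ ∀ t, 0 ≤ t → ∀ x₁ x₂ y₁ y₂,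
      ‖J x₁ y₁ t - J x₂ y₂ t‖ ^ 2 ≤
        C * t * Real.exp (-γ * t / 2) * (‖x₁ - x₂‖ ^ 2 + ‖y₁ - y₂‖ ^ 2) := by
  obtain ⟨C₀, hC₀, hcontr⟩ := hcontr
  have hlipA := stmt6_aux_lip b M hM hb hbd2
  refine ⟨2 * M ^ 2 * (2 * C₀ + 2) / (3 * γ) + 1, by positivity, ?_⟩
  set C : ℝ := 2 * M ^ 2 * (2 * C₀ + 2) / (3 * γ) + 1 with hC
  intro t ht x₁ x₂ y₁ y₂
  set S : ℝ := ‖x₁ - x₂‖ ^ 2 + ‖y₁ - y₂‖ ^ 2 with hSdef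
  have hS : 0 ≤ S := by positivity
  set A : EuclideanSpace ℝ (Fin n) → EuclideanSpace ℝ (Fin m) →
      (EuclideanSpace ℝ (Fin n) →L[ℝ] EuclideanSpace ℝ (Fin n)) :=
    fun x y => fderiv ℝ (fun x' => b x' y) x with hA
  -- the key pointwise bound
  have key : ∀ v : EuclideanSpace ℝ (Fin n),
      ‖(J x₁ y₁ t - J x₂ y₂ t) v‖ ^ 2 ≤
        C * t * Real.exp (-γ * t / 2) * S * ‖v‖ ^ 2 := by
    intro v
    set d : ℝ → EuclideanSpace ℝ (Fin n) := fun s => (J x₁ y₁ s - J x₂ y₂ s) v with hd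
    set w : ℝ → EuclideanSpace ℝ (Fin n) := fun s =>
      A (X x₁ y₁ s) y₁ (d s) + (A (X x₁ y₁ s) y₁ - A (X x₂ y₂ s) y₂) (J x₂ y₂ s v) with hw
    have hdAt : ∀ s, HasDerivAt d (w s) s := by
      intro s
      have h1 := ((hJ x₁ y₁ s).sub (hJ x₂ y₂ s)).clm_apply (hasDerivAt_const s v)
      have heq : ((A (X x₁ y₁ s) y₁).comp (J x₁ y₁ s)
            - (A (X x₂ y₂ s) y₂).comp (J x₂ y₂ s)) v
          + (J x₁ y₁ s - J x₂ y₂ s) 0 = w s := by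
        simp only [hw, hd, ContinuousLinearMap.sub_apply, ContinuousLinearMap.comp_apply,
          map_sub, map_zero, add_zero]
        abel
      rw [← heq]
      exact h1
    set F : ℝ → ℝ := fun s => Real.exp (γ * s / 2) * ⟪d s, d s⟫ with hF
    set F' : ℝ → ℝ := fun s => γ / 2 * Real.exp (γ * s / 2) * ⟪d s, d s⟫
      + Real.exp (γ * s / 2) * (⟪d s, w s⟫ + ⟪w s, d s⟫) with hF'
    have hFAt : ∀ s, HasDerivAt F (F' s) s := by
      intro s
      have hlin : HasDerivAt (fun s : ℝ => γ * s / 2) (γ / 2) s := by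
        simpa using ((hasDerivAt_id s).const_mul γ).div_const 2
      have hexp : HasDerivAt (fun s : ℝ => Real.exp (γ * s / 2))
          (Real.exp (γ * s / 2) * (γ / 2)) s := (Real.hasDerivAt_exp _).comp s hlin
      have hinner := (hdAt s).inner ℝ (hdAt s)
      have := hexp.mul hinner
      refine this.congr_deriv ?_
      simp only [hF']
      ring
    set B : ℝ := 2 * M ^ 2 * (2 * C₀ + 2) / (3 * γ) * (S * ‖v‖ ^ 2) with hB
    have hF0 : F 0 = 0 := by
      have : d 0 = 0 := by
        simp [hd, hJ0]
      simp [hF, this]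
    have hbdF' : ∀ s ∈ Set.Ioo 0 t, F' s ≤ B := by
      intro s hs
      have hs0 : (0:ℝ) ≤ s := le_of_lt hs.1
      set a : ℝ := ‖d s‖ with ha
      set g : ℝ := ‖(A (X x₁ y₁ s) y₁ - A (X x₂ y₂ s) y₂) (J x₂ y₂ s v)‖ with hg
      have hdd : ⟪d s, d s⟫ = a ^ 2 := real_inner_self_eq_norm_sq (d s)
      -- dissipative term
      have hdiss' : ⟪A (X x₁ y₁ s) y₁ (d s), d s⟫ ≤ -γ * a ^ 2 :=
        hdiss (X x₁ y₁ s) y₁ (d s)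
      -- cross term
      have hcross : ⟪(A (X x₁ y₁ s) y₁ - A (X x₂ y₂ s) y₂) (J x₂ y₂ s v), d s⟫ ≤ g * a :=
        le_trans (real_inner_le_norm _ _) le_rfl
      have hwd : ⟪w s, d s⟫ ≤ -γ * a ^ 2 + g * a := by
        rw [hw]
        rw [inner_add_left]
        exact add_le_add hdiss' hcross
      -- bound on g ^ 2
      have hg2 : g ^ 2 ≤ M ^ 2 * ((2 * C₀ + 2) * S) * Real.exp (-γ * s / 2) * ‖v‖ ^ 2 := by
        have h1 : g ≤ ‖A (X x₁ y₁ s) y₁ - A (X x₂ y₂ s) y₂‖ * ‖J x₂ y₂ s v‖ :=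
          ContinuousLinearMap.le_opNorm _ _
        have h2 : ‖A (X x₁ y₁ s) y₁ - A (X x₂ y₂ s) y₂‖
            ≤ M * (‖X x₁ y₁ s - X x₂ y₂ s‖ + ‖y₁ - y₂‖) := hlipA _ _ _ _
        have h3 : ‖J x₂ y₂ s v‖ ^ 2 ≤ Real.exp (-γ * s / 2) * ‖v‖ ^ 2 := by
          have := hJbd x₂ y₂ s hs0
          have h4 : ‖J x₂ y₂ s v‖ ≤ ‖J x₂ y₂ s‖ * ‖v‖ := ContinuousLinearMap.le_opNorm _ _
          have h5 : ‖J x₂ y₂ s v‖ ^ 2 ≤ (‖J x₂ y₂ s‖ * ‖v‖) ^ 2 :=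
            pow_le_pow_left₀ (norm_nonneg _) h4 2
          calc ‖J x₂ y₂ s v‖ ^ 2 ≤ ‖J x₂ y₂ s‖ ^ 2 * ‖v‖ ^ 2 := by
                rw [mul_pow] at h5; exact h5
            _ ≤ Real.exp (-γ * s / 2) * ‖v‖ ^ 2 :=
                mul_le_mul_of_nonneg_right this (by positivity)
        have hXb : ‖X x₁ y₁ s - X x₂ y₂ s‖ ^ 2 ≤
            Real.exp (-γ * s / 2) * ‖x₁ - x₂‖ ^ 2 + C₀ * ‖y₁ - y₂‖ ^ 2 :=
          hcontr s hs0 x₁ x₂ y₁ y₂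
        have hexple : Real.exp (-γ * s / 2) ≤ 1 := by
          apply Real.exp_le_one_iff.2
          nlinarith
        have hsum2 : (‖X x₁ y₁ s - X x₂ y₂ s‖ + ‖y₁ - y₂‖) ^ 2 ≤ (2 * C₀ + 2) * S := by
          have h6 : ‖X x₁ y₁ s - X x₂ y₂ s‖ ^ 2 ≤ ‖x₁ - x₂‖ ^ 2 + C₀ * ‖y₁ - y₂‖ ^ 2 := by
            nlinarith [sq_nonneg ‖x₁ - x₂‖]
          nlinarith [sq_nonneg (‖X x₁ y₁ s - X x₂ y₂ s‖ - ‖y₁ - y₂‖),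
            sq_nonneg ‖x₁ - x₂‖, sq_nonneg ‖y₁ - y₂‖, norm_nonneg (x₁ - x₂),
            norm_nonneg (y₁ - y₂)]
        have hgle : g ≤ M * (‖X x₁ y₁ s - X x₂ y₂ s‖ + ‖y₁ - y₂‖) * ‖J x₂ y₂ s v‖ := by
          calc g ≤ ‖A (X x₁ y₁ s) y₁ - A (X x₂ y₂ s) y₂‖ * ‖J x₂ y₂ s v‖ := h1
            _ ≤ M * (‖X x₁ y₁ s - X x₂ y₂ s‖ + ‖y₁ - y₂‖) * ‖J x₂ y₂ s v‖ :=
                mul_le_mul_of_nonneg_right h2 (norm_nonneg _)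
        have hg0 : 0 ≤ g := norm_nonneg _
        have := pow_le_pow_left₀ hg0 hgle 2
        calc g ^ 2 ≤ (M * (‖X x₁ y₁ s - X x₂ y₂ s‖ + ‖y₁ - y₂‖)) ^ 2 * ‖J x₂ y₂ s v‖ ^ 2 := by
              rw [mul_pow] at this; exact this
          _ ≤ M ^ 2 * ((2 * C₀ + 2) * S) * (Real.exp (-γ * s / 2) * ‖v‖ ^ 2) := by
              apply mul_le_mul _ h3 (by positivity) (by positivity)
              rw [mul_pow]
              exact mul_le_mul_of_nonneg_left hsum2 (by positivity)
          _ = M ^ 2 * ((2 * C₀ + 2) * S) * Real.exp (-γ * s / 2) * ‖v‖ ^ 2 := by ring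
      -- Young's inequality
      have hyoung : 2 * (g * a) ≤ 3 * γ / 2 * a ^ 2 + 2 / (3 * γ) * g ^ 2 := by
        have h3 : (0:ℝ) < 3 * γ := by linarith
        have heq : 2 / (3 * γ) * g ^ 2 * (3 * γ) = 2 * g ^ 2 := by field_simp
        nlinarith [sq_nonneg (3 * γ * a - 2 * g), h3, heq]
      have hepos : (0:ℝ) < Real.exp (γ * s / 2) := Real.exp_pos _
      have hcancel : Real.exp (γ * s / 2) * Real.exp (-γ * s / 2) = 1 := by
        rw [← Real.exp_add]; ring_nf; exact Real.exp_zero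
      have hmain : F' s ≤ Real.exp (γ * s / 2) * (2 / (3 * γ) * g ^ 2) := by
        have hsym : ⟪d s, w s⟫ = ⟪w s, d s⟫ := real_inner_comm _ _
        have h7 : γ / 2 * ⟪d s, d s⟫ + (⟪d s, w s⟫ + ⟪w s, d s⟫)
            ≤ 2 / (3 * γ) * g ^ 2 := by
          rw [hsym, hdd]
          nlinarith [hwd, hyoung, hγ]
        calc F' s = Real.exp (γ * s / 2) *
              (γ / 2 * ⟪d s, d s⟫ + (⟪d s, w s⟫ + ⟪w s, d s⟫)) := by
              simp only [hF']; ring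
          _ ≤ Real.exp (γ * s / 2) * (2 / (3 * γ) * g ^ 2) :=
              mul_le_mul_of_nonneg_left h7 (le_of_lt hepos)
      calc F' s ≤ Real.exp (γ * s / 2) * (2 / (3 * γ) * g ^ 2) := hmain
        _ ≤ Real.exp (γ * s / 2) * (2 / (3 * γ) *
            (M ^ 2 * ((2 * C₀ + 2) * S) * Real.exp (-γ * s / 2) * ‖v‖ ^ 2)) := by
            apply mul_le_mul_of_nonneg_left _ (le_of_lt hepos)
            apply mul_le_mul_of_nonneg_left hg2 (by positivity)
        _ = (Real.exp (γ * s / 2) * Real.exp (-γ * s / 2)) *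
            (2 / (3 * γ) * (M ^ 2 * ((2 * C₀ + 2) * S) * ‖v‖ ^ 2)) := by ring
        _ = B := by rw [hcancel, hB]; ring
    have hFt : F t ≤ B * t := stmt6_aux_mvt F F' B t ht hFAt hF0 hbdF'
    -- unfold F t
    have hdt : ‖d t‖ ^ 2 ≤ B * t * Real.exp (-γ * t / 2) := by
      have h8 : Real.exp (γ * t / 2) * ‖d t‖ ^ 2 ≤ B * t := by
        rw [← real_inner_self_eq_norm_sq (d t)]
        exact hFt
      have hcancel : Real.exp (-γ * t / 2) * Real.exp (γ * t / 2) = 1 := by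
        rw [← Real.exp_add]; ring_nf; exact Real.exp_zero
      have := mul_le_mul_of_nonneg_left h8 (le_of_lt (Real.exp_pos (-γ * t / 2)))
      calc ‖d t‖ ^ 2 = Real.exp (-γ * t / 2) * Real.exp (γ * t / 2) * ‖d t‖ ^ 2 := by
            rw [hcancel, one_mul]
        _ = Real.exp (-γ * t / 2) * (Real.exp (γ * t / 2) * ‖d t‖ ^ 2) := by ring
        _ ≤ Real.exp (-γ * t / 2) * (B * t) := this
        _ = B * t * Real.exp (-γ * t / 2) := by ring
    calc ‖(J x₁ y₁ t - J x₂ y₂ t) v‖ ^ 2 = ‖d t‖ ^ 2 := rfl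
      _ ≤ B * t * Real.exp (-γ * t / 2) := hdt
      _ ≤ C * t * Real.exp (-γ * t / 2) * S * ‖v‖ ^ 2 := by
          rw [hB, hC]
          have hexp0 : (0:ℝ) ≤ Real.exp (-γ * t / 2) := le_of_lt (Real.exp_pos _)
          nlinarith [mul_nonneg (mul_nonneg (mul_nonneg ht hexp0) hS) (sq_nonneg ‖v‖)]
  -- conclude via operator norm
  set K : ℝ := C * t * Real.exp (-γ * t / 2) * S with hK
  have hK0 : 0 ≤ K := by
    have : (0:ℝ) < C := by rw [hC]; positivity
    rw [hK]
    have hexp0 : (0:ℝ) ≤ Real.exp (-γ * t / 2) := le_of_lt (Real.exp_pos _)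
    positivity
  have hop : ‖J x₁ y₁ t - J x₂ y₂ t‖ ≤ Real.sqrt K := by
    apply ContinuousLinearMap.opNorm_le_bound _ (Real.sqrt_nonneg K)
    intro v
    have h9 := key v
    have h10 : ‖(J x₁ y₁ t - J x₂ y₂ t) v‖ ^ 2 ≤ (Real.sqrt K * ‖v‖) ^ 2 := by
      rw [mul_pow, Real.sq_sqrt hK0]
      exact h9
    exact (pow_le_pow_iff_left₀ (norm_nonneg _)
      (mul_nonneg (Real.sqrt_nonneg K) (norm_nonneg v)) (by norm_num)).1 h10
  calc ‖J x₁ y₁ t - J x₂ y₂ t‖ ^ 2 ≤ (Real.sqrt K) ^ 2 :=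
        pow_le_pow_left₀ (norm_nonneg _) hop 2
    _ = K := Real.sq_sqrt hK0
    _ = C * t * Real.exp (-γ * t / 2) * (‖x₁ - x₂‖ ^ 2 + ‖y₁ - y₂‖ ^ 2) := rfl
end

section
/- Let h : [0,T] → ℝᵐ be càdlàg, and let (tⁿ_k)_{0≤k≤k_n} be a sequence of subdivisions 0 = tⁿ₀ < tⁿ₁ < ⋯ < tⁿ_{k_n} = T such that max_i |tⁿ_{i+1} − tⁿ_i| → 0 and sup_{u ∈ [0,T] \ {tⁿ₀,…,tⁿ_{k_n}}} |Δh(u)| → 0 as n → ∞, where Δh(u) = h(u) − h(u⁻). Then the step functions h_n(u) := Σ_{i=0}^{k_n−1} h(tⁿ_i) 1_{[tⁿ_i, tⁿ_{i+1})}(u) + h(tⁿ_{k_n}) 1_{{tⁿ_{k_n}}}(u) converge to h uniformly on [0,T]. -/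
/-!
If the step approximations did not converge uniformly, there would be `ε > 0`, infinitely many
`n`, and points `vₙ ≤ wₙ` of a common cell of the `n`-th subdivision with `|h wₙ - h vₙ| ≥ ε`;
as the mesh tends to zero, `wₙ - vₙ → 0`. Along a subsequence both converge to some `c`. If
infinitely many `vₙ, wₙ` lay on the same side of `c` (in `[c, T]` or in `[0, c)`), right
continuity or the existence of `h (c-)` would force `|h wₙ - h vₙ| → 0`. Hence `vₙ < c ≤ wₙ`
along the subsequence, so `c` is not a subdivision point and `|Δh(c)| = lim |h wₙ - h vₙ| ≥ ε`,
contradicting the assumption that the jumps off the subdivisions tend to zero. Boundedness of `h`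
on `[0, T]`, which keeps that supremum of jumps from being a junk value, follows by compactness
from the same one-sided local control.
-/

open Set Function Filter Topology

structure IsCadlagOn {E : Type*} [TopologicalSpace E] (h : ℝ → E) (a b : ℝ) : Prop where
  continuousWithinAt_Ici : ∀ u ∈ Ico a b, ContinuousWithinAt h (Ici u) u
  tendsto_leftLim : ∀ u ∈ Ioc a b, Tendsto h (𝓝[<] u) (𝓝 (leftLim h u))

namespace IsCadlagOn

section Topological

variable {E : Type*} [TopologicalSpace E] {h : ℝ → E} {a b u : ℝ}

theorem tendsto_nhdsWithin_Icc (hh : IsCadlagOn h a b) (hu : u ∈ Icc a b) :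
    Tendsto h (𝓝[Icc u b] u) (𝓝 (h u)) := by
  rcases hu.2.lt_or_eq with hub | rfl
  · exact (hh.continuousWithinAt_Ici u ⟨hu.1, hub⟩).mono Icc_subset_Ici_self
  · rw [Icc_self]; exact continuousWithinAt_singleton

theorem tendsto_nhdsWithin_Ico (hh : IsCadlagOn h a b) (hu : u ∈ Icc a b) :
    Tendsto h (𝓝[Ico a u] u) (𝓝 (leftLim h u)) := by
  rcases hu.1.lt_or_eq with hau | rfl
  · exact (hh.tendsto_leftLim u ⟨hau, hu.2⟩).mono_left (nhdsWithin_mono _ fun _ hx => hx.2)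
  · simp

end Topological

variable {E : Type*} [NormedAddCommGroup E] {h : ℝ → E} {a b : ℝ}

theorem isBounded_image (hh : IsCadlagOn h a b) : Bornology.IsBounded (h '' Icc a b) := by
  refine isCompact_Icc.induction_on (p := fun s => Bornology.IsBounded (h '' s)) (by simp)
    (fun s t hst ht => ht.subset (image_mono hst))
    (fun s t hs ht => by simpa only [image_union] using hs.union ht) fun u hu => ?_
  refine ⟨h ⁻¹' Metric.ball (leftLim h u) 1 ∪ h ⁻¹' Metric.ball (h u) 1, ?_, ?_⟩
  · rw [← Ico_union_Icc_eq_Icc hu.1 hu.2, nhdsWithin_union]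
    exact union_mem_sup ((hh.tendsto_nhdsWithin_Ico hu) (Metric.ball_mem_nhds _ one_pos))
      ((hh.tendsto_nhdsWithin_Icc hu) (Metric.ball_mem_nhds _ one_pos))
  · rw [image_union]
    exact (Metric.isBounded_ball.subset (image_preimage_subset _ _)).union
      (Metric.isBounded_ball.subset (image_preimage_subset _ _))

theorem le_ciSup_norm_sub_leftLim (hh : IsCadlagOn h a b) {p : ℝ → Prop}
    (hp : ∀ u, p u → u ∈ Ioc a b) {c : ℝ} (hc : p c) :
    ‖h c - leftLim h c‖ ≤ ⨆ u : {u // p u}, ‖h u - leftLim h u‖ := by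
  obtain ⟨C, hC⟩ := isBounded_iff_forall_norm_le.1 hh.isBounded_image.closure
  refine le_ciSup (f := fun u : {u // p u} => ‖h u - leftLim h u‖) ⟨C + C, ?_⟩ ⟨c, hc⟩
  rintro _ ⟨⟨u, hpu⟩, rfl⟩
  have hu := hp u hpu
  refine (norm_sub_le _ _).trans (add_le_add ?_ ?_)
  · exact hC _ (subset_closure (mem_image_of_mem h (Ioc_subset_Icc_self hu)))
  · refine hC _ (mem_closure_of_tendsto (hh.tendsto_leftLim u hu) ?_)
    filter_upwards [Ioo_mem_nhdsLT hu.1] with x hx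
    exact mem_image_of_mem h ⟨hx.1.le, hx.2.le.trans hu.2⟩

theorem exists_le_norm_sub_leftLim_of_forall_le_norm_sub (hh : IsCadlagOn h a b) {v w : ℕ → ℝ}
    {ε : ℝ} (hε : 0 < ε) (hv : ∀ j, a ≤ v j) (hvw : ∀ j, v j ≤ w j) (hw : ∀ j, w j ≤ b)
    (hwv : Tendsto (w - v) atTop (𝓝 0)) (hosc : ∀ j, ε ≤ ‖h (w j) - h (v j)‖) :
    ∃ c, ε ≤ ‖h c - leftLim h c‖ ∧ ∃ᶠ j in atTop, v j < c ∧ c ≤ w j := by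
  obtain ⟨c, hc, ψ, hψ, hwc⟩ :=
    isCompact_Icc.tendsto_subseq fun j => (⟨(hv j).trans (hvw j), hw j⟩ : w j ∈ Icc a b)
  have hvψ : Tendsto (fun j => v (ψ j)) atTop (𝓝 c) := by
    simpa using hwc.sub (hwv.comp hψ.tendsto_atTop)
  set F := map ψ atTop
  have hwF : Tendsto w F (𝓝 c) := tendsto_map'_iff.2 hwc
  have hvF : Tendsto v F (𝓝 c) := tendsto_map'_iff.2 hvψ
  have right {G : Filter ℕ} {x : ℕ → ℝ} (hx : Tendsto x G (𝓝 c))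
      (hxc : ∀ᶠ j in G, x j ∈ Icc c b) : Tendsto (h ∘ x) G (𝓝 (h c)) :=
    (hh.tendsto_nhdsWithin_Icc hc).comp (tendsto_nhdsWithin_iff.2 ⟨hx, hxc⟩)
  have left {G : Filter ℕ} {x : ℕ → ℝ} (hx : Tendsto x G (𝓝 c))
      (hxc : ∀ᶠ j in G, x j ∈ Ico a c) : Tendsto (h ∘ x) G (𝓝 (leftLim h c)) :=
    (hh.tendsto_nhdsWithin_Ico hc).comp (tendsto_nhdsWithin_iff.2 ⟨hx, hxc⟩)
  have le_norm_sub {G : Filter ℕ} [G.NeBot] {x y : E} (hx : Tendsto (h ∘ w) G (𝓝 x))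
      (hy : Tendsto (h ∘ v) G (𝓝 y)) : ε ≤ ‖x - y‖ :=
    ge_of_tendsto (hx.sub hy).norm (Eventually.of_forall hosc)
  have hv_lt : ∀ᶠ j in F, v j < c := by
    by_contra hfreq
    rw [not_eventually, frequently_iff_neBot] at hfreq
    have hS : ∀ᶠ j in F ⊓ 𝓟 {j | ¬ v j < c}, c ≤ v j :=
      mem_inf_of_right (mem_principal.2 fun j hj => not_lt.1 hj)
    have := le_norm_sub
      (right (hwF.mono_left inf_le_left) (hS.mono fun j hj => ⟨hj.trans (hvw j), hw j⟩))
      (right (hvF.mono_left inf_le_left) (hS.mono fun j hj => ⟨hj, (hvw j).trans (hw j)⟩))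
    exact hε.not_ge (by simpa using this)
  have hc_le : ∀ᶠ j in F, c ≤ w j := by
    by_contra hfreq
    rw [not_eventually, frequently_iff_neBot] at hfreq
    have hS : ∀ᶠ j in F ⊓ 𝓟 {j | ¬ c ≤ w j}, w j < c :=
      mem_inf_of_right (mem_principal.2 fun j hj => not_le.1 hj)
    have := le_norm_sub
      (left (hwF.mono_left inf_le_left) (hS.mono fun j hj => ⟨(hv j).trans (hvw j), hj⟩))
      (left (hvF.mono_left inf_le_left) (hS.mono fun j hj => ⟨hv j, (hvw j).trans_lt hj⟩))
    exact hε.not_ge (by simpa using this)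
  refine ⟨c, le_norm_sub (right hwF (hc_le.mono fun j hj => ⟨hj, hw j⟩))
    (left hvF (hv_lt.mono fun j hj => ⟨hv j, hj⟩)), ?_⟩
  exact ((hv_lt.and hc_le).frequently).filter_mono hψ.tendsto_atTop

end IsCadlagOn

theorem exists_mem_Ico_succ_of_mem_Ico {s : ℕ → ℝ} {K : ℕ} {u : ℝ} (hu : u ∈ Ico (s 0) (s K)) :
    ∃ i < K, u ∈ Ico (s i) (s (i + 1)) := by
  classical
  set i := Nat.findGreatest (fun i => s i ≤ u) K
  have hsi : s i ≤ u := Nat.findGreatest_spec (P := fun i => s i ≤ u) K.zero_le hu.1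
  have hiK : i < K :=
    (Nat.findGreatest_le K).lt_of_ne fun hiK => (hsi.trans_lt hu.2).ne (congrArg s hiK)
  exact ⟨i, hiK, hsi, not_le.1 (Nat.findGreatest_is_greatest i.lt_succ_self hiK)⟩

theorem MonotoneOn.ne_of_mem_Ioo_succ {s : ℕ → ℝ} {K i j : ℕ} {c : ℝ}
    (hs : MonotoneOn s (Iic K)) (hi : i < K) (hc : c ∈ Ioo (s i) (s (i + 1))) (hj : j ≤ K) :
    c ≠ s j := by
  rcases le_or_gt j i with hji | hij
  · exact (hc.1.trans_le' (hs hj hi.le hji)).ne'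
  · exact (hc.2.trans_le (hs hi hj hij)).ne

theorem exists_lt_norm_sub_of_lt_iSup {E : Type*} [NormedAddCommGroup E] {s : ℕ → ℝ} {K : ℕ}
    {a b : ℝ} (hs : MonotoneOn s (Iic K)) (hs0 : s 0 = a) (hsK : s K = b) {g f : ℝ → E}
    (hstep : ∀ i < K, ∀ u ∈ Ico (s i) (s (i + 1)), f u = g (s i)) (hend : f b = g b) {δ : ℝ}
    (hδ : 0 ≤ δ) (hlt : δ < ⨆ u : Icc a b, ‖g u - f u‖) :
    ∃ i < K, ∃ u ∈ Ico (s i) (s (i + 1)), δ < ‖g u - g (s i)‖ := by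
  subst hs0 hsK
  have : Nonempty (Icc (s 0) (s K)) :=
    ⟨⟨s 0, left_mem_Icc.2 (hs K.zero_le self_mem_Iic K.zero_le)⟩⟩
  obtain ⟨⟨u, hu⟩, hδu⟩ := exists_lt_of_lt_ciSup hlt
  have huK : u < s K := hu.2.lt_of_ne fun huK => by
    simp only [huK, hend, sub_self, norm_zero] at hδu
    linarith
  obtain ⟨i, hi, hui⟩ := exists_mem_Ico_succ_of_mem_Ico ⟨hu.1, huK⟩
  exact ⟨i, hi, u, hui, hstep i hi u hui ▸ hδu⟩

theorem stmt_14_general {m : ℕ} (T : ℝ)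
    (h : ℝ → EuclideanSpace ℝ (Fin m))
    -- h is càdlàg on [0,T]
    (hrc : ∀ u ∈ Set.Ico (0:ℝ) T, ContinuousWithinAt h (Set.Ici u) u)
    (hll : ∀ u ∈ Set.Ioc (0:ℝ) T, Tendsto h (𝓝[<] u) (𝓝 (Function.leftLim h u)))
    -- the subdivisions 0 = tⁿ₀ < tⁿ₁ < ⋯ < tⁿ_{k_n} = T
    (k : ℕ → ℕ) (t : ℕ → ℕ → ℝ)
    (ht0 : ∀ n, t n 0 = 0) (htT : ∀ n, t n (k n) = T)
    (hmono : ∀ n i, i < k n → t n i < t n (i + 1))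
    -- the mesh tends to zero
    (hmesh : Tendsto (fun n => ⨆ i : Fin (k n), (t n ((i : ℕ) + 1) - t n (i : ℕ)))
      atTop (𝓝 0))
    -- the jumps outside the subdivision points tend to zero uniformly
    (hjump : Tendsto (fun n =>
        ⨆ u : {u : ℝ // u ∈ Set.Icc (0:ℝ) T ∧ ∀ i ≤ k n, (u : ℝ) ≠ t n i},
          ‖h (u : ℝ) - Function.leftLim h (u : ℝ)‖)
      atTop (𝓝 0))
    -- hn is the associated sequence of step functions
    (hn : ℕ → ℝ → EuclideanSpace ℝ (Fin m))
    (hstep : ∀ n i, i < k n → ∀ u ∈ Set.Ico (t n i) (t n (i + 1)), hn n u = h (t n i))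
    (hend : ∀ n, hn n T = h T) :
    Tendsto (fun n => ⨆ u : Set.Icc (0:ℝ) T, ‖h (u : ℝ) - hn n (u : ℝ)‖)
      atTop (𝓝 0) := by
  have hh : IsCadlagOn h 0 T := ⟨hrc, hll⟩
  have ht : ∀ n, MonotoneOn (t n) (Iic (k n)) := fun n =>
    (strictMonoOn_Iic_of_lt_succ fun i hi => by simpa using hmono n i hi).monotoneOn
  refine tendsto_order.2 ⟨fun ε hε => Eventually.of_forall fun n =>
    hε.trans_le (Real.iSup_nonneg fun _ => norm_nonneg _), fun ε hε => ?_⟩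
  by_contra hfreq
  obtain ⟨φ, hφ, hεφ⟩ := extraction_of_frequently_atTop
    ((not_eventually.1 hfreq).mono fun _ => le_of_not_gt)
  choose I hI w hw hosc using fun j => exists_lt_norm_sub_of_lt_iSup (ht (φ j)) (ht0 _) (htT _)
    (hstep (φ j)) (hend _) (half_pos hε).le ((half_lt_self hε).trans_le (hεφ j))
  have hv0 : ∀ j, 0 ≤ t (φ j) (I j) := fun j =>
    ht0 (φ j) ▸ ht _ (Nat.zero_le _) (hI j).le (Nat.zero_le _)
  have hwT : ∀ j, w j < T := fun j =>
    htT (φ j) ▸ (hw j).2.trans_le (ht _ (hI j) self_mem_Iic (hI j))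
  have hmesh' : Tendsto (fun j => w j - t (φ j) (I j)) atTop (𝓝 0) := by
    refine squeeze_zero (fun j => sub_nonneg.2 (hw j).1) (fun j => ?_)
      (hmesh.comp hφ.tendsto_atTop)
    exact (sub_le_sub_right (hw j).2.le _).trans
      (le_ciSup (f := fun i : Fin (k (φ j)) => t (φ j) (i + 1) - t (φ j) i)
        (Set.finite_range _).bddAbove ⟨I j, hI j⟩)
  obtain ⟨c, hc, hcw⟩ := hh.exists_le_norm_sub_leftLim_of_forall_le_norm_sub (half_pos hε)
    hv0 (fun j => (hw j).1) (fun j => (hwT j).le) hmesh' (fun j => (hosc j).le)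
  obtain ⟨j, ⟨hvc, hcw⟩, hJ⟩ := (hcw.and_eventually ((hjump.comp hφ.tendsto_atTop).eventually
    (gt_mem_nhds (half_pos hε)))).exists
  have hc_off : c ∈ Icc 0 T ∧ ∀ i ≤ k (φ j), c ≠ t (φ j) i :=
    ⟨⟨(hv0 j).trans hvc.le, hcw.trans (hwT j).le⟩,
      fun i => (ht _).ne_of_mem_Ioo_succ (hI j) ⟨hvc, hcw.trans_lt (hw j).2⟩⟩
  exact hJ.not_ge (hc.trans (hh.le_ciSup_norm_sub_leftLim
    (fun u hu => ⟨hu.1.1.lt_of_ne (ht0 (φ j) ▸ hu.2 0 (Nat.zero_le _)).symm, hu.1.2⟩) hc_off))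

/-- uniform approximation of a càdlàg function by step functions along
subdivisions whose mesh tends to zero and which eventually capture all jumps. -/
theorem stmt_14 {m : ℕ} (T : ℝ) (hT : 0 < T)
    (h : ℝ → EuclideanSpace ℝ (Fin m))
    -- h is càdlàg on [0,T]
    (hrc : ∀ u ∈ Set.Ico (0:ℝ) T, ContinuousWithinAt h (Set.Ici u) u)
    (hll : ∀ u ∈ Set.Ioc (0:ℝ) T, Tendsto h (𝓝[<] u) (𝓝 (Function.leftLim h u)))
    -- the subdivisions 0 = tⁿ₀ < tⁿ₁ < ⋯ < tⁿ_{k_n} = T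
    (k : ℕ → ℕ) (t : ℕ → ℕ → ℝ)
    (hk : ∀ n, 0 < k n)
    (ht0 : ∀ n, t n 0 = 0) (htT : ∀ n, t n (k n) = T)
    (hmono : ∀ n i, i < k n → t n i < t n (i + 1))
    -- the mesh tends to zero
    (hmesh : Tendsto (fun n => ⨆ i : Fin (k n), (t n ((i : ℕ) + 1) - t n (i : ℕ)))
      atTop (𝓝 0))
    -- the jumps outside the subdivision points tend to zero uniformly
    (hjump : Tendsto (fun n =>
        ⨆ u : {u : ℝ // u ∈ Set.Icc (0:ℝ) T ∧ ∀ i ≤ k n, (u : ℝ) ≠ t n i},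
          ‖h (u : ℝ) - Function.leftLim h (u : ℝ)‖)
      atTop (𝓝 0))
    -- hn is the associated sequence of step functions
    (hn : ℕ → ℝ → EuclideanSpace ℝ (Fin m))
    (hstep : ∀ n i, i < k n → ∀ u ∈ Set.Ico (t n i) (t n (i + 1)), hn n u = h (t n i))
    (hend : ∀ n, hn n T = h T) :
    Tendsto (fun n => ⨆ u : Set.Icc (0:ℝ) T, ‖h (u : ℝ) - hn n (u : ℝ)‖)
      atTop (𝓝 0) :=
  stmt_14_general T h hrc hll k t ht0 htT hmono hmesh hjump hn hstep hend
end
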